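/- Let σ : ℝ → ℝ and c > 0. Let Ŷ : ℝ³ → ℝ (arguments (x, l, t)) be twice continuously differentiable with Ŷ_l(x,l,t) < 0 for all (x,l,t), satisfying Ŷ_t + (σ(x)²/2)·Ŷ_{xx} + (σ(x)²/(2c))·Ŷ_x² = 0 at every point. Let L̂ : ℝ³ → ℝ (arguments (x, y, t)) be twice continuously differentiable and satisfy Ŷ(x, L̂(x,y,t), t) = y for all (x,y,t). Then at every point (x,y,t), with partial derivatives of Ŷ evaluated at (x, L̂(x,y,t), t): (i) L̂_y = 1/Ŷ_l < 0 and L̂_x = −Ŷ_x/Ŷ_l; (ii) L̂ satisfies the quasilinear equation L̂_t + (σ(x)²/2)·(L̂_{xx} − 2·(L̂_x/L̂_y)·L̂_{xy} + (L̂_x²/L̂_y²)·L̂_{yy}) − (σ(x)²/(2c))·L̂_x²/L̂_y = 0. (Step 3 of the paper's regularity theorem: the PDE satisfied by L̂ defined implicitly from Ŷ.) -/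

import Mathlib

/-!
Differentiating `Ŷ(x, L̂(x,y,t), t) = y` once in `x`, `y`, `t` and twice in `(x,x)`, `(x,y)`,
`(y,y)` (using `Ŷ_xl = Ŷ_lx`) gives six linear relations which, since `Ŷ_l ≠ 0`, express every
partial derivative of `L̂` through those of `Ŷ`. Substituting them, the quasilinear operator
applied to `L̂` equals `-(Ŷ_t + (σ²/2) Ŷ_xx + (σ²/(2c)) Ŷ_x²) / Ŷ_l`, which vanishes.
-/

/-- First partial derivative in the 1st argument of a function of three real variables. -/
noncomputable def p1 (f : ℝ → ℝ → ℝ → ℝ) (x y t : ℝ) : ℝ := deriv (fun a => f a y t) x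
/-- First partial derivative in the 2nd argument. -/
noncomputable def p2 (f : ℝ → ℝ → ℝ → ℝ) (x y t : ℝ) : ℝ := deriv (fun b => f x b t) y
/-- First partial derivative in the 3rd argument. -/
noncomputable def p3 (f : ℝ → ℝ → ℝ → ℝ) (x y t : ℝ) : ℝ := deriv (fun s => f x y s) t
/-- Second partial derivative in the 1st argument. -/
noncomputable def p11 (f : ℝ → ℝ → ℝ → ℝ) : ℝ → ℝ → ℝ → ℝ := p1 (p1 f)
/-- Mixed second partial derivative (first in the 1st, then in the 2nd argument). -/
noncomputable def p12 (f : ℝ → ℝ → ℝ → ℝ) : ℝ → ℝ → ℝ → ℝ := p2 (p1 f)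
/-- Second partial derivative in the 2nd argument. -/
noncomputable def p22 (f : ℝ → ℝ → ℝ → ℝ) : ℝ → ℝ → ℝ → ℝ := p2 (p2 f)

noncomputable def uncurry₃ (f : ℝ → ℝ → ℝ → ℝ) : ℝ × ℝ × ℝ → ℝ := fun p => f p.1 p.2.1 p.2.2

lemma ContinuousLinearMap.apply_triple (φ : ℝ × ℝ × ℝ →L[ℝ] ℝ) (a b c : ℝ) :
    φ (a, b, c) = a * φ (1, 0, 0) + b * φ (0, 1, 0) + c * φ (0, 0, 1) := by
  have h : ((a, b, c) : ℝ × ℝ × ℝ) = a • (1, 0, 0) + b • (0, 1, 0) + c • (0, 0, 1) := by simp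
  rw [h, map_add, map_add, map_smul, map_smul, map_smul, smul_eq_mul, smul_eq_mul, smul_eq_mul]

section Partials

variable {f : ℝ → ℝ → ℝ → ℝ} {x y t : ℝ}

lemma hasDerivAt_uncurry₃_comp_fderiv {g₁ g₂ g₃ : ℝ → ℝ} {d₁ d₂ d₃ s : ℝ}
    (hf : DifferentiableAt ℝ (uncurry₃ f) (g₁ s, g₂ s, g₃ s))
    (h₁ : HasDerivAt g₁ d₁ s) (h₂ : HasDerivAt g₂ d₂ s) (h₃ : HasDerivAt g₃ d₃ s) :
    HasDerivAt (fun s => f (g₁ s) (g₂ s) (g₃ s))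
      (fderiv ℝ (uncurry₃ f) (g₁ s, g₂ s, g₃ s) (d₁, d₂, d₃)) s :=
  HasFDerivAt.comp_hasDerivAt (l := uncurry₃ f) s hf.hasFDerivAt (h₁.prodMk (h₂.prodMk h₃))

lemma p1_eq_fderiv (hf : DifferentiableAt ℝ (uncurry₃ f) (x, y, t)) :
    p1 f x y t = fderiv ℝ (uncurry₃ f) (x, y, t) (1, 0, 0) :=
  (hasDerivAt_uncurry₃_comp_fderiv hf (hasDerivAt_id x) (hasDerivAt_const x y)
    (hasDerivAt_const x t)).deriv

lemma p2_eq_fderiv (hf : DifferentiableAt ℝ (uncurry₃ f) (x, y, t)) :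
    p2 f x y t = fderiv ℝ (uncurry₃ f) (x, y, t) (0, 1, 0) :=
  (hasDerivAt_uncurry₃_comp_fderiv hf (hasDerivAt_const y x) (hasDerivAt_id y)
    (hasDerivAt_const y t)).deriv

lemma p3_eq_fderiv (hf : DifferentiableAt ℝ (uncurry₃ f) (x, y, t)) :
    p3 f x y t = fderiv ℝ (uncurry₃ f) (x, y, t) (0, 0, 1) :=
  (hasDerivAt_uncurry₃_comp_fderiv hf (hasDerivAt_const t x) (hasDerivAt_const t y)
    (hasDerivAt_id t)).deriv

lemma hasDerivAt_uncurry₃_comp {g₁ g₂ g₃ : ℝ → ℝ} {d₁ d₂ d₃ s : ℝ}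
    (hf : DifferentiableAt ℝ (uncurry₃ f) (g₁ s, g₂ s, g₃ s))
    (h₁ : HasDerivAt g₁ d₁ s) (h₂ : HasDerivAt g₂ d₂ s) (h₃ : HasDerivAt g₃ d₃ s) :
    HasDerivAt (fun s => f (g₁ s) (g₂ s) (g₃ s))
      (d₁ * p1 f (g₁ s) (g₂ s) (g₃ s) + d₂ * p2 f (g₁ s) (g₂ s) (g₃ s)
        + d₃ * p3 f (g₁ s) (g₂ s) (g₃ s)) s := by
  rw [p1_eq_fderiv hf, p2_eq_fderiv hf, p3_eq_fderiv hf, ← ContinuousLinearMap.apply_triple]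
  exact hasDerivAt_uncurry₃_comp_fderiv hf h₁ h₂ h₃

lemma uncurry₃_p1 (hf : Differentiable ℝ (uncurry₃ f)) :
    uncurry₃ (p1 f) = fun p => fderiv ℝ (uncurry₃ f) p (1, 0, 0) :=
  funext fun _ => p1_eq_fderiv (hf _)

lemma uncurry₃_p2 (hf : Differentiable ℝ (uncurry₃ f)) :
    uncurry₃ (p2 f) = fun p => fderiv ℝ (uncurry₃ f) p (0, 1, 0) :=
  funext fun _ => p2_eq_fderiv (hf _)

lemma contDiff_uncurry₃_p1 {n : WithTop ℕ∞} (hf : ContDiff ℝ (n + 1) (uncurry₃ f)) :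
    ContDiff ℝ n (uncurry₃ (p1 f)) := by
  rw [uncurry₃_p1 (hf.differentiable (by simp))]
  exact (hf.fderiv_right le_rfl).clm_apply contDiff_const

lemma contDiff_uncurry₃_p2 {n : WithTop ℕ∞} (hf : ContDiff ℝ (n + 1) (uncurry₃ f)) :
    ContDiff ℝ n (uncurry₃ (p2 f)) := by
  rw [uncurry₃_p2 (hf.differentiable (by simp))]
  exact (hf.fderiv_right le_rfl).clm_apply contDiff_const

lemma hasDerivAt_p1 (hf : DifferentiableAt ℝ (uncurry₃ f) (x, y, t)) :
    HasDerivAt (fun a => f a y t) (p1 f x y t) x := by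
  simpa using hasDerivAt_uncurry₃_comp hf (hasDerivAt_id x) (hasDerivAt_const x y)
    (hasDerivAt_const x t)

lemma hasDerivAt_p2 (hf : DifferentiableAt ℝ (uncurry₃ f) (x, y, t)) :
    HasDerivAt (fun b => f x b t) (p2 f x y t) y := by
  simpa using hasDerivAt_uncurry₃_comp hf (hasDerivAt_const y x) (hasDerivAt_id y)
    (hasDerivAt_const y t)

lemma hasDerivAt_p3 (hf : DifferentiableAt ℝ (uncurry₃ f) (x, y, t)) :
    HasDerivAt (fun s => f x y s) (p3 f x y t) t := by
  simpa using hasDerivAt_uncurry₃_comp hf (hasDerivAt_const t x) (hasDerivAt_const t y)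
    (hasDerivAt_id t)

lemma p1_p2_eq_p12 (hf : ContDiff ℝ 2 (uncurry₃ f)) : p1 (p2 f) x y t = p12 f x y t := by
  have hf' : Differentiable ℝ (uncurry₃ f) := hf.differentiable two_ne_zero
  have hd : Differentiable ℝ (fderiv ℝ (uncurry₃ f)) :=
    (hf.fderiv_right (m := 1) le_rfl).differentiable one_ne_zero
  have hmixed (v : ℝ × ℝ × ℝ) (p : ℝ × ℝ × ℝ) (w : ℝ × ℝ × ℝ) :
      fderiv ℝ (fun q => fderiv ℝ (uncurry₃ f) q v) p w
        = fderiv ℝ (fderiv ℝ (uncurry₃ f)) p w v := by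
    rw [fderiv_clm_apply (hd p) (differentiableAt_const v)]
    simp
  rw [p12, p1_eq_fderiv ((contDiff_uncurry₃_p2 (n := 1) hf).differentiable one_ne_zero _),
    p2_eq_fderiv ((contDiff_uncurry₃_p1 (n := 1) hf).differentiable one_ne_zero _),
    uncurry₃_p1 hf', uncurry₃_p2 hf', hmixed, hmixed]
  exact (hf.contDiffAt.isSymmSndFDerivAt (by simp)) _ _

end Partials

section Inverse

/- Derivatives of the identity `Y x (L x y t) t = y`; the one in `(x, x)` needs the symmetry
`Y_xl = Y_lx`. -/

variable {Y L : ℝ → ℝ → ℝ → ℝ} (hinv : ∀ x y t, Y x (L x y t) t = y) (x y t : ℝ)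
include hinv

lemma inverse_relation_dx (hY : Differentiable ℝ (uncurry₃ Y))
    (hL : Differentiable ℝ (uncurry₃ L)) :
    p1 Y x (L x y t) t + p2 Y x (L x y t) t * p1 L x y t = 0 := by
  have h := hasDerivAt_uncurry₃_comp (hY _) (hasDerivAt_id x) (hasDerivAt_p1 (hL (x, y, t)))
    (hasDerivAt_const x t)
  simp only [id, hinv] at h
  linear_combination h.unique (hasDerivAt_const x y)

lemma inverse_relation_dy (hY : Differentiable ℝ (uncurry₃ Y))
    (hL : Differentiable ℝ (uncurry₃ L)) :
    p2 Y x (L x y t) t * p2 L x y t = 1 := by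
  have h := hasDerivAt_uncurry₃_comp (hY _) (hasDerivAt_const y x) (hasDerivAt_p2 (hL (x, y, t)))
    (hasDerivAt_const y t)
  simp only [hinv] at h
  linear_combination h.unique (hasDerivAt_id y)

lemma inverse_relation_dt (hY : Differentiable ℝ (uncurry₃ Y))
    (hL : Differentiable ℝ (uncurry₃ L)) :
    p2 Y x (L x y t) t * p3 L x y t + p3 Y x (L x y t) t = 0 := by
  have h := hasDerivAt_uncurry₃_comp (hY _) (hasDerivAt_const t x) (hasDerivAt_p3 (hL (x, y, t)))
    (hasDerivAt_id t)
  simp only [id, hinv] at h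
  linear_combination h.unique (hasDerivAt_const t y)

variable (hY : ContDiff ℝ 2 (uncurry₃ Y)) (hL : ContDiff ℝ 2 (uncurry₃ L))
include hY hL

lemma inverse_relation_dxdx :
    p11 Y x (L x y t) t + 2 * p1 L x y t * p12 Y x (L x y t) t
      + p1 L x y t ^ 2 * p22 Y x (L x y t) t + p2 Y x (L x y t) t * p11 L x y t = 0 := by
  have hY₁ := (contDiff_uncurry₃_p1 (n := 1) hY).differentiable one_ne_zero
  have hY₂ := (contDiff_uncurry₃_p2 (n := 1) hY).differentiable one_ne_zero
  have hL₁ := (contDiff_uncurry₃_p1 (n := 1) hL).differentiable one_ne_zero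
  have hp1L := hasDerivAt_p1 (hL.differentiable two_ne_zero (x, y, t))
  have h := (hasDerivAt_uncurry₃_comp (hY₁ _) (hasDerivAt_id x) hp1L (hasDerivAt_const x t)).add
    ((hasDerivAt_uncurry₃_comp (hY₂ _) (hasDerivAt_id x) hp1L (hasDerivAt_const x t)).mul
      (hasDerivAt_p1 (hL₁ (x, y, t))))
  have hzero : (fun s => p1 Y s (L s y t) t) + (fun s => p2 Y s (L s y t) t) * (fun a => p1 L a y t)
      = fun _ => 0 := funext fun a =>
    inverse_relation_dx hinv a y t (hY.differentiable two_ne_zero) (hL.differentiable two_ne_zero)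
  simp only [id] at h
  rw [hzero, p1_p2_eq_p12 hY] at h
  unfold p11 p12 p22 at *
  linear_combination h.unique (hasDerivAt_const x 0)

lemma inverse_relation_dxdy :
    p2 L x y t * p12 Y x (L x y t) t + p2 L x y t * p1 L x y t * p22 Y x (L x y t) t
      + p2 Y x (L x y t) t * p12 L x y t = 0 := by
  have hY₁ := (contDiff_uncurry₃_p1 (n := 1) hY).differentiable one_ne_zero
  have hY₂ := (contDiff_uncurry₃_p2 (n := 1) hY).differentiable one_ne_zero
  have hL₁ := (contDiff_uncurry₃_p1 (n := 1) hL).differentiable one_ne_zero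
  have hp2L := hasDerivAt_p2 (hL.differentiable two_ne_zero (x, y, t))
  have h := (hasDerivAt_uncurry₃_comp (hY₁ _) (hasDerivAt_const y x) hp2L
    (hasDerivAt_const y t)).add ((hasDerivAt_uncurry₃_comp (hY₂ _) (hasDerivAt_const y x) hp2L
      (hasDerivAt_const y t)).mul (hasDerivAt_p2 (hL₁ (x, y, t))))
  have hzero : (fun s => p1 Y x (L x s t) t) + (fun s => p2 Y x (L x s t) t) * (fun b => p1 L x b t)
      = fun _ => 0 := funext fun b =>
    inverse_relation_dx hinv x b t (hY.differentiable two_ne_zero) (hL.differentiable two_ne_zero)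
  rw [hzero] at h
  unfold p12 p22
  linear_combination h.unique (hasDerivAt_const y 0)

lemma inverse_relation_dydy :
    p2 L x y t ^ 2 * p22 Y x (L x y t) t + p2 Y x (L x y t) t * p22 L x y t = 0 := by
  have hY₂ := (contDiff_uncurry₃_p2 (n := 1) hY).differentiable one_ne_zero
  have hL₂ := (contDiff_uncurry₃_p2 (n := 1) hL).differentiable one_ne_zero
  have h := (hasDerivAt_uncurry₃_comp (hY₂ _) (hasDerivAt_const y x)
    (hasDerivAt_p2 (hL.differentiable two_ne_zero (x, y, t))) (hasDerivAt_const y t)).mul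
      (hasDerivAt_p2 (hL₂ (x, y, t)))
  have hone : (fun s => p2 Y x (L x s t) t) * (fun b => p2 L x b t) = fun _ => 1 :=
    funext fun b =>
      inverse_relation_dy hinv x b t (hY.differentiable two_ne_zero) (hL.differentiable two_ne_zero)
  rw [hone] at h
  unfold p22
  linear_combination h.unique (hasDerivAt_const y 1)

end Inverse

lemma quasilinear_pde_of_inverse_relations
    {a b Yx Yl Yt Yxx Yxl Yll Lx Ly Lt Lxx Lxy Lyy : ℝ} (hYl : Yl ≠ 0)
    (hPDE : Yt + a * Yxx + b * Yx ^ 2 = 0)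
    (hx : Yx + Yl * Lx = 0) (hy : Yl * Ly = 1) (ht : Yl * Lt + Yt = 0)
    (hxx : Yxx + 2 * Lx * Yxl + Lx ^ 2 * Yll + Yl * Lxx = 0)
    (hxy : Ly * Yxl + Ly * Lx * Yll + Yl * Lxy = 0)
    (hyy : Ly ^ 2 * Yll + Yl * Lyy = 0) :
    Lt + a * (Lxx - 2 * (Lx / Ly) * Lxy + Lx ^ 2 / Ly ^ 2 * Lyy) - b * Lx ^ 2 / Ly = 0 := by
  have hLy : Ly ≠ 0 := right_ne_zero_of_mul_eq_one hy
  -- `Yl` times the cleared operator is `-Ly² (Yt + a Yxx + b Yx²)` modulo the other relations.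
  have hcleared : Yl * (Lt * Ly ^ 2 + a * (Lxx * Ly ^ 2 - 2 * Lx * Ly * Lxy + Lx ^ 2 * Lyy)
      - b * Lx ^ 2 * Ly) = 0 := by
    linear_combination Ly ^ 2 * ht + a * Ly ^ 2 * hxx - 2 * a * Lx * Ly * hxy + a * Lx ^ 2 * hyy
      - Ly ^ 2 * hPDE + b * Ly ^ 2 * (Yx - Yl * Lx) * hx + b * Lx ^ 2 * Ly * Yl * hy
  have h := (mul_eq_zero.mp hcleared).resolve_left hYl
  field_simp
  linear_combination h

theorem stmt_15_general
    (σ : ℝ → ℝ) (c : ℝ)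
    (Y : ℝ → ℝ → ℝ → ℝ)
    (hY : ContDiff ℝ 2 (fun p : ℝ × ℝ × ℝ => Y p.1 p.2.1 p.2.2))
    (hYl : ∀ x l t : ℝ, p2 Y x l t < 0)
    (hPDEY : ∀ x l t : ℝ,
      p3 Y x l t + σ x ^ 2 / 2 * p11 Y x l t
        + σ x ^ 2 / (2 * c) * (p1 Y x l t) ^ 2 = 0)
    (Lh : ℝ → ℝ → ℝ → ℝ)
    (hLh : ContDiff ℝ 2 (fun p : ℝ × ℝ × ℝ => Lh p.1 p.2.1 p.2.2))
    (hinv : ∀ x y t : ℝ, Y x (Lh x y t) t = y) :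
    ∀ x y t : ℝ,
      (p2 Lh x y t = 1 / p2 Y x (Lh x y t) t
        ∧ p2 Lh x y t < 0
        ∧ p1 Lh x y t = -(p1 Y x (Lh x y t) t) / p2 Y x (Lh x y t) t)
      ∧ p3 Lh x y t
          + σ x ^ 2 / 2
            * (p11 Lh x y t
              - 2 * (p1 Lh x y t / p2 Lh x y t) * p12 Lh x y t
              + (p1 Lh x y t) ^ 2 / (p2 Lh x y t) ^ 2 * p22 Lh x y t)
          - σ x ^ 2 / (2 * c) * (p1 Lh x y t) ^ 2 / p2 Lh x y t = 0 := by
  intro x y t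
  have hYd : Differentiable ℝ (uncurry₃ Y) := hY.differentiable two_ne_zero
  have hLd : Differentiable ℝ (uncurry₃ Lh) := hLh.differentiable two_ne_zero
  have hYl_ne : p2 Y x (Lh x y t) t ≠ 0 := (hYl x (Lh x y t) t).ne
  have hdy := inverse_relation_dy hinv x y t hYd hLd
  have hdx := inverse_relation_dx hinv x y t hYd hLd
  have hLy : p2 Lh x y t = 1 / p2 Y x (Lh x y t) t := eq_one_div_of_mul_eq_one_right hdy
  refine ⟨⟨hLy, hLy ▸ one_div_neg.mpr (hYl x (Lh x y t) t), ?_⟩, ?_⟩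
  · rw [eq_div_iff hYl_ne]
    linear_combination hdx
  · exact quasilinear_pde_of_inverse_relations hYl_ne (hPDEY x (Lh x y t) t) hdx hdy
      (inverse_relation_dt hinv x y t hYd hLd) (inverse_relation_dxdx hinv x y t hY hLh)
      (inverse_relation_dxdy hinv x y t hY hLh) (inverse_relation_dydy hinv x y t hY hLh)

/-- Step 3 of the regularity theorem: let `Ŷ(x,l,t)` be `C²` with `Ŷ_l < 0` everywhere
and satisfy `Ŷ_t + (σ²/2)Ŷ_{xx} + (σ²/(2c))Ŷ_x² = 0`; let `L̂(x,y,t)` be `C²` with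
`Ŷ(x, L̂(x,y,t), t) = y`. Then at every point (partials of `Ŷ` taken at `(x, L̂, t)`):
(i) `L̂_y = 1/Ŷ_l < 0` and `L̂_x = −Ŷ_x/Ŷ_l`; (ii) `L̂` satisfies the quasilinear
equation `L̂_t + (σ²/2)(L̂_{xx} − 2(L̂_x/L̂_y)L̂_{xy} + (L̂_x²/L̂_y²)L̂_{yy})
− (σ²/(2c))L̂_x²/L̂_y = 0`. -/
theorem stmt_15
    (σ : ℝ → ℝ) (c : ℝ) (hc : 0 < c)
    (Y : ℝ → ℝ → ℝ → ℝ)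
    (hY : ContDiff ℝ 2 (fun p : ℝ × ℝ × ℝ => Y p.1 p.2.1 p.2.2))
    (hYl : ∀ x l t : ℝ, p2 Y x l t < 0)
    (hPDEY : ∀ x l t : ℝ,
      p3 Y x l t + σ x ^ 2 / 2 * p11 Y x l t
        + σ x ^ 2 / (2 * c) * (p1 Y x l t) ^ 2 = 0)
    (Lh : ℝ → ℝ → ℝ → ℝ)
    (hLh : ContDiff ℝ 2 (fun p : ℝ × ℝ × ℝ => Lh p.1 p.2.1 p.2.2))
    (hinv : ∀ x y t : ℝ, Y x (Lh x y t) t = y) :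
    ∀ x y t : ℝ,
      (p2 Lh x y t = 1 / p2 Y x (Lh x y t) t
        ∧ p2 Lh x y t < 0
        ∧ p1 Lh x y t = -(p1 Y x (Lh x y t) t) / p2 Y x (Lh x y t) t)
      ∧ p3 Lh x y t
          + σ x ^ 2 / 2
            * (p11 Lh x y t
              - 2 * (p1 Lh x y t / p2 Lh x y t) * p12 Lh x y t
              + (p1 Lh x y t) ^ 2 / (p2 Lh x y t) ^ 2 * p22 Lh x y t)
          - σ x ^ 2 / (2 * c) * (p1 Lh x y t) ^ 2 / p2 Lh x y t = 0 :=
  stmt_15_general σ c Y hY hYl hPDEY Lh hLh hinv
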